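/- For all integers k ≥ 0 and a ≥ 0, in K[B] one has B_odd^{(2k)} · B_odd^{(2a)} = [2k+2a choose 2k] · ( B_odd^{(2k+2a)} + Σ_{ℓ=1}^{k} ( ∏_{m=1}^{ℓ} [2a−2m+2]·[2k−2m+2] / ( [2k+2a−2m+1]·[2m] ) ) · (qς)^{ℓ} · B_odd^{(2k+2a−2ℓ)} ). -/

import Mathlib

noncomputable section

open Polynomial Finset

abbrev Kq : Type := RatFunc ℚ

/-- The variable `q` in `ℚ(q)`. -/
def qq : Kq := RatFunc.X

/-- The quantum integer `[n] = (q^n - q^{-n})/(q - q^{-1})` for `n : ℤ`. -/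
def qint (n : ℤ) : Kq := (qq ^ n - qq ^ (-n)) / (qq - qq⁻¹)

/-- The quantum factorial `[n]! = ∏_{i=1}^n [i]`. -/
def qfact (n : ℕ) : Kq := ∏ i ∈ Finset.range n, qint ((i : ℤ) + 1)

/-- The quantum binomial `[n choose m] = [n]!/([m]!·[n-m]!)`. -/
def qbinom (n m : ℕ) : Kq := qfact n / (qfact m * qfact (n - m))

/-- The even ı-divided power `B_ev^{(n)}` in `K[B]`. -/
def BevP (ς : Kq) (n : ℕ) : Polynomial Kq :=
  if Even n then
    Polynomial.C (qfact n)⁻¹ *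
      ∏ j ∈ Finset.range (n / 2),
        ((Polynomial.X : Polynomial Kq) ^ 2 - Polynomial.C (qq * ς * (qint (2 * (j : ℤ))) ^ 2))
  else
    Polynomial.C (qfact n)⁻¹ *
      (Polynomial.X *
        ∏ j ∈ Finset.range (n / 2),
          ((Polynomial.X : Polynomial Kq) ^ 2 - Polynomial.C (qq * ς * (qint (2 * (j : ℤ) + 2)) ^ 2)))

/-- The odd ı-divided power `B_odd^{(n)}` in `K[B]`. -/
def BoddP (ς : Kq) (n : ℕ) : Polynomial Kq :=
  if Even n then
    Polynomial.C (qfact n)⁻¹ *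
      ∏ j ∈ Finset.range (n / 2),
        ((Polynomial.X : Polynomial Kq) ^ 2 - Polynomial.C (qq * ς * (qint (2 * (j : ℤ) + 1)) ^ 2))
  else
    Polynomial.C (qfact n)⁻¹ *
      (Polynomial.X *
        ∏ j ∈ Finset.range (n / 2),
          ((Polynomial.X : Polynomial Kq) ^ 2 - Polynomial.C (qq * ς * (qint (2 * (j : ℤ) + 1)) ^ 2)))

lemma qq_ne_zero : qq ≠ 0 := RatFunc.X_ne_zero

lemma qq_pow_ne_one {m : ℕ} (hm : m ≠ 0) : qq ^ m ≠ (1 : Kq) := by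
  intro h
  have : (Polynomial.X : ℚ[X]) ^ m = 1 := by
    apply RatFunc.algebraMap_injective ℚ
    simpa [qq, RatFunc.algebraMap_eq_C, map_pow] using h
  have := congrArg Polynomial.natDegree this
  simp [Polynomial.natDegree_X_pow] at this
  omega

lemma qq_zpow_ne_one {n : ℤ} (hn : n ≠ 0) : qq ^ n ≠ (1 : Kq) := by
  intro h
  rcases lt_or_gt_of_ne hn with h1 | h1
  · have : qq ^ (-n) = (1 : Kq) := by
      rw [zpow_neg, h]; simp
    rw [show -n = ((-n).toNat : ℤ) by omega, zpow_natCast] at this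
    exact qq_pow_ne_one (by omega) this
  · rw [show n = (n.toNat : ℤ) by omega, zpow_natCast] at h
    exact qq_pow_ne_one (by omega) h

lemma qq_sub_inv_ne : qq - qq⁻¹ ≠ (0 : Kq) := by
  intro h
  have : qq * qq = 1 := by
    have := sub_eq_zero.mp h
    field_simp [qq_ne_zero] at this
    linear_combination this
  have : qq ^ (2:ℕ) = (1:Kq) := by rw [pow_two]; exact this
  exact qq_pow_ne_one (by norm_num) this

lemma qint_ne_zero {n : ℤ} (hn : n ≠ 0) : qint n ≠ 0 := by
  unfold qint
  apply div_ne_zero _ qq_sub_inv_ne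
  intro h
  have h2 : qq ^ (2 * n) = (1 : Kq) := by
    have := sub_eq_zero.mp h
    rw [two_mul, zpow_add₀ qq_ne_zero]
    nth_rewrite 2 [this]
    rw [← zpow_add₀ qq_ne_zero]
    simp
  exact qq_zpow_ne_one (by omega) h2

lemma qint_zero : qint 0 = 0 := by simp [qint]

lemma qint_expand (n : ℤ) : qint n = (qq^n - (qq^n)⁻¹) / (qq - qq⁻¹) := by
  rw [qint, zpow_neg]

lemma genKey {F : Type*} [CommRing F] (A B C s a b c t : F)
    (ha : A*a = 1) (hc : C*c = 1) (ht : s*t = 1) :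
    (A*s - a*t) * (A*B*s - a*b*t) + (A*B*C*(s*s) - a*b*c*(t*t)) * (C*a - c*A)
    = (A - a) * (A*B - a*b) + (A*B*C*s - a*b*c*t) * (C*a*s - c*A*t) := by
  linear_combination (b - s*b*t + B - B*s*t) * ha
    + (-(a^2*b*t^2) + s*a^2*b*t + A^2*B*s*t - A^2*B*s^2) * hc
    + (-b + a^2*b - B + A^2*B) * ht

lemma sqKey {F : Type*} [CommRing F] (Pv Rv p r : F) (hP : Pv*p = 1) (hR : Rv*r = 1) :
    (Pv - p)*(Pv - p) - (Rv - r)*(Rv - r) = (Pv*Rv - p*r)*(Pv*r - p*Rv) := by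
  linear_combination (-2 + r^2 + Rv^2)*hP + (2 - p^2 - Pv^2)*hR

lemma zpow_mul_zpow_neg (n : ℤ) : qq ^ n * qq ^ (-n) = 1 := by
  rw [← zpow_add₀ qq_ne_zero]; simp

lemma sqDiff (p r : ℤ) : qint p ^ 2 - qint r ^ 2 = qint (p+r) * qint (p-r) := by
  have hq := qq_ne_zero
  simp only [qint, pow_two, sub_eq_add_neg, neg_add, neg_neg, zpow_add₀ hq]
  rw [div_mul_div_comm, div_mul_div_comm, div_mul_div_comm, ← neg_div, ← add_div]
  congr 1
  linear_combination sqKey (qq^p) (qq^r) (qq^(-p)) (qq^(-r))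
    (zpow_mul_zpow_neg p) (zpow_mul_zpow_neg r)

lemma genId (x y z : ℤ) :
    qint (x+2) * qint (x+y+2) + qint (x+y+z+4) * qint (z-x)
      = qint x * qint (x+y) + qint (x+y+z+2) * qint (z-x+2) := by
  have hq := qq_ne_zero
  have inv2 : qq^(2:ℤ) * qq^(-2:ℤ) = 1 := zpow_mul_zpow_neg 2
  have hx := zpow_mul_zpow_neg x
  have hy := zpow_mul_zpow_neg y
  have hz := zpow_mul_zpow_neg z
  have h4 : qq^(4:ℤ) = qq^(2:ℤ)*qq^(2:ℤ) := by rw [← zpow_add₀ hq]; norm_num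
  have h4' : qq^(-4:ℤ) = qq^(-2:ℤ)*qq^(-2:ℤ) := by rw [← zpow_add₀ hq]; norm_num
  simp only [qint, sub_eq_add_neg, neg_add, neg_neg, zpow_add₀ hq]
  rw [h4, h4']
  rw [div_mul_div_comm, div_mul_div_comm, div_mul_div_comm, div_mul_div_comm,
    ← add_div, ← add_div]
  congr 1
  linear_combination genKey (qq^x) (qq^y) (qq^z) (qq^(2:ℤ)) (qq^(-x)) (qq^(-y)) (qq^(-z))
    (qq^(-2:ℤ)) hx hz inv2

def QP (ς : Kq) (n : ℕ) : Polynomial Kq :=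
  ∏ j ∈ Finset.range n, ((Polynomial.X : Polynomial Kq) ^ 2 - Polynomial.C (qq * ς * (qint (2 * (j : ℤ) + 1)) ^ 2))

def Nc (ς : Kq) (k a ℓ : ℕ) : Kq :=
  (qq * ς) ^ ℓ * ∏ m ∈ Finset.range ℓ,
    (qint (2*(k:ℤ) - 2*(m:ℤ)) * qint (2*(a:ℤ) - 2*(m:ℤ)) * qint (2*(k:ℤ) + 2*(a:ℤ) - 2*(m:ℤ)))

def efP (ℓ : ℕ) : Kq := ∏ m ∈ Finset.range ℓ, qint (2*(m:ℤ) + 2)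

lemma Nc_succ (ς : Kq) (k a ℓ : ℕ) :
    Nc ς k a (ℓ+1) = Nc ς k a ℓ * ((qq * ς) *
      (qint (2*(k:ℤ) - 2*(ℓ:ℤ)) * qint (2*(a:ℤ) - 2*(ℓ:ℤ)) * qint (2*(k:ℤ) + 2*(a:ℤ) - 2*(ℓ:ℤ)))) := by
  rw [Nc, Nc, Finset.prod_range_succ, pow_succ]
  ring

lemma NRec (ς : Kq) (k a : ℕ) : ∀ ℓ : ℕ, ℓ ≤ k →
    Nc ς (k+1) a (ℓ+1) = Nc ς k a (ℓ+1)
      + qint (2*(ℓ:ℤ)+2) * ((qq*ς) * (qint (4*(k:ℤ)+2*(a:ℤ)-2*(ℓ:ℤ)+2) * qint (2*(a:ℤ)-2*(ℓ:ℤ)))) * Nc ς k a ℓ := by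
  intro ℓ
  induction ℓ with
  | zero =>
    intro _
    have h := genId (2*(k:ℤ)) (2*(a:ℤ)) (2*(k:ℤ))
    rw [show 2*(k:ℤ) - 2*(k:ℤ) = 0 by ring, qint_zero] at h
    have n0 : ∀ k' : ℕ, Nc ς k' a 0 = 1 := by intro k'; simp [Nc]
    rw [show (1:ℕ) = 0 + 1 from rfl, Nc_succ, Nc_succ, n0, n0]
    push_cast
    linear_combination (norm := ring_nf) (qq * ς * qint (2*(a:ℤ))) * h
  | succ ℓ ih =>
    intro hk
    have hℓk : ℓ ≤ k := by omega
    have h := genId (2*(k:ℤ) - 2*(ℓ:ℤ) - 2) (2*(a:ℤ)) (2*(k:ℤ))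
    have e1 := Nc_succ ς (k+1) a (ℓ+1)
    have e2 := Nc_succ ς k a (ℓ+1)
    have e3 := Nc_succ ς k a ℓ
    have e4 := ih hℓk
    push_cast at e1 e2 e3 e4 ⊢
    ring_nf at h e1 e2 e3 e4 ⊢
    rw [e1, e4, e2, e3]
    linear_combination (norm := ring_nf) ((qq*ς)^2 * Nc ς k a ℓ *
      (qint (2*(k:ℤ) - 2*(ℓ:ℤ)) * qint (2*(a:ℤ) - 2*(ℓ:ℤ) - 2) * qint (2*(k:ℤ) + 2*(a:ℤ) - 2*(ℓ:ℤ)) *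
        qint (2*(a:ℤ) - 2*(ℓ:ℤ)))) * h

lemma efP_succ (ℓ : ℕ) : efP (ℓ+1) = efP ℓ * qint (2*(ℓ:ℤ)+2) := Finset.prod_range_succ _ _

lemma qint_pos_ne {n : ℤ} (h : 0 < n) : qint n ≠ 0 := qint_ne_zero (by omega)

lemma efP_ne_zero (ℓ : ℕ) : efP ℓ ≠ 0 := by
  apply Finset.prod_ne_zero_iff.mpr
  intro m _
  exact qint_pos_ne (by omega)

def eC (ς : Kq) (k a ℓ : ℕ) : Kq := Nc ς k a ℓ / efP ℓ

lemma eC_zero (k a : ℕ) (ς : Kq) : eC ς k a 0 = 1 := by simp [eC, Nc, efP]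

lemma eC_top (k a : ℕ) (ς : Kq) : eC ς k a (k+1) = 0 := by
  rw [eC, Nc]
  rw [Finset.prod_eq_zero (Finset.self_mem_range_succ k)]
  · simp
  · rw [show 2*(k:ℤ) - 2*(k:ℤ) = 0 by ring, qint_zero]
    ring

lemma eRec (ς : Kq) (k a ℓ : ℕ) (hℓ : ℓ ≤ k) :
    eC ς (k+1) a (ℓ+1) = eC ς k a (ℓ+1)
      + (qq*ς) * (qint (4*(k:ℤ)+2*(a:ℤ)-2*(ℓ:ℤ)+2) * qint (2*(a:ℤ)-2*(ℓ:ℤ))) * eC ς k a ℓ := by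
  have h2 : qint (2*(ℓ:ℤ)+2) ≠ 0 := qint_pos_ne (by omega)
  have hef : efP ℓ ≠ 0 := efP_ne_zero ℓ
  rw [eC, eC, eC, NRec ς k a ℓ hℓ, efP_succ]
  field_simp

lemma QP_succ (ς : Kq) (n : ℕ) :
    QP ς (n+1) = QP ς n * ((Polynomial.X : Polynomial Kq)^2 - Polynomial.C (qq*ς*(qint (2*(n:ℤ)+1))^2)) :=
  Finset.prod_range_succ _ _

lemma QP_mul_factor (ς : Kq) (n kk : ℕ) :
    QP ς n * ((Polynomial.X : Polynomial Kq)^2 - Polynomial.C (qq*ς*(qint (2*(kk:ℤ)+1))^2))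
      = QP ς (n+1) + Polynomial.C (qq*ς*(qint (2*(n:ℤ)+1))^2 - qq*ς*(qint (2*(kk:ℤ)+1))^2) * QP ς n := by
  rw [QP_succ, map_sub]
  ring

lemma term_step (ς : Kq) (k a ℓ : ℕ) (hℓ : ℓ ≤ k) :
    eC ς (k+1) a (ℓ+1) = eC ς k a (ℓ+1)
      + eC ς k a ℓ * (qq*ς*(qint (2*((k+a-ℓ:ℕ):ℤ)+1))^2 - qq*ς*(qint (2*(k:ℤ)+1))^2) := by
  have hc : ((k+a-ℓ:ℕ):ℤ) = (k:ℤ)+(a:ℤ)-(ℓ:ℤ) := by omega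
  rw [hc]
  have hs := sqDiff (2*(k:ℤ)+2*(a:ℤ)-2*(ℓ:ℤ)+1) (2*(k:ℤ)+1)
  have her := eRec ς k a ℓ hℓ
  linear_combination (norm := ring_nf) her - (qq*ς*eC ς k a ℓ) * hs

lemma mainP (ς : Kq) (a : ℕ) : ∀ k : ℕ,
    QP ς k * QP ς a = ∑ ℓ ∈ Finset.range (k+1), Polynomial.C (eC ς k a ℓ) * QP ς (k+a-ℓ) := by
  intro k
  induction k with
  | zero =>
    rw [Finset.sum_range_one, eC_zero, map_one, one_mul]
    have h0 : QP ς 0 = 1 := Finset.prod_range_zero _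
    rw [h0, one_mul]
    norm_num
  | succ k ih =>
    have step1 : QP ς (k+1) * QP ς a
        = (∑ ℓ ∈ Finset.range (k+1), Polynomial.C (eC ς k a ℓ) * QP ς (k+a-ℓ+1))
          + ∑ ℓ ∈ Finset.range (k+1),
              Polynomial.C (eC ς k a ℓ *
                (qq*ς*(qint (2*((k+a-ℓ:ℕ):ℤ)+1))^2 - qq*ς*(qint (2*(k:ℤ)+1))^2)) * QP ς (k+a-ℓ) := by
      calc QP ς (k+1) * QP ς a
          = (QP ς k * QP ς a) *
            ((Polynomial.X : Polynomial Kq)^2 - Polynomial.C (qq*ς*(qint (2*(k:ℤ)+1))^2)) := by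
            rw [QP_succ]; ring
        _ = ∑ ℓ ∈ Finset.range (k+1), Polynomial.C (eC ς k a ℓ) *
              (QP ς (k+a-ℓ) *
                ((Polynomial.X : Polynomial Kq)^2 - Polynomial.C (qq*ς*(qint (2*(k:ℤ)+1))^2))) := by
            rw [ih, Finset.sum_mul]
            exact Finset.sum_congr rfl (fun ℓ _ => by ring)
        _ = ∑ ℓ ∈ Finset.range (k+1),
              (Polynomial.C (eC ς k a ℓ) * QP ς (k+a-ℓ+1)
                + Polynomial.C (eC ς k a ℓ *
                    (qq*ς*(qint (2*((k+a-ℓ:ℕ):ℤ)+1))^2 - qq*ς*(qint (2*(k:ℤ)+1))^2)) * QP ς (k+a-ℓ)) := by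
            refine Finset.sum_congr rfl (fun ℓ hℓ => ?_)
            rw [QP_mul_factor, map_mul]
            ring
        _ = _ := Finset.sum_add_distrib
    have hfirst : (∑ ℓ ∈ Finset.range (k+1), Polynomial.C (eC ς k a ℓ) * QP ς (k+a-ℓ+1))
        = Polynomial.C (eC ς k a 0) * QP ς (k+a-0+1)
          + ∑ ℓ ∈ Finset.range (k+1), Polynomial.C (eC ς k a (ℓ+1)) * QP ς (k+a-(ℓ+1)+1) := by
      have hext : ∑ ℓ ∈ Finset.range (k+2), Polynomial.C (eC ς k a ℓ) * QP ς (k+a-ℓ+1)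
          = ∑ ℓ ∈ Finset.range (k+1), Polynomial.C (eC ς k a ℓ) * QP ς (k+a-ℓ+1) := by
        rw [Finset.sum_range_succ, eC_top, map_zero, zero_mul, add_zero]
      rw [← hext, Finset.sum_range_succ']
      ring
    rw [step1, hfirst]
    conv_rhs => rw [Finset.sum_range_succ']
    rw [eC_zero, eC_zero]
    have hidx : k+a-0+1 = k+1+a-0 := by omega
    rw [hidx, add_assoc, ← Finset.sum_add_distrib, add_comm (∑ ℓ ∈ Finset.range (k+1),
      Polynomial.C (eC ς (k+1) a (ℓ+1)) * QP ς (k+1+a-(ℓ+1))) _]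
    congr 1
    refine Finset.sum_congr rfl (fun ℓ hℓ => ?_)
    have hℓk : ℓ ≤ k := by
      have := Finset.mem_range.mp hℓ; omega
    by_cases hcase : ℓ+1 ≤ k+a
    · have hidx2 : k+a-(ℓ+1)+1 = k+a-ℓ := by omega
      have hidx3 : k+1+a-(ℓ+1) = k+a-ℓ := by omega
      rw [hidx2, hidx3, term_step ς k a ℓ hℓk, map_add, map_mul]
      ring
    · have ha0 : a = 0 := by omega
      have hlk : ℓ = k := by omega
      rw [hlk, ha0]
      have i1 : k+0-(k+1)+1 = 1 := by omega
      have i2 : k+0-k = 0 := by omega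
      have i3 : k+1+0-(k+1) = 0 := by omega
      rw [term_step ς k 0 k le_rfl, eC_top, zero_add, i1, i2, i3, map_zero, zero_mul, zero_add]

lemma qfact_succ (n : ℕ) : qfact (n+1) = qfact n * qint ((n:ℤ)+1) := Finset.prod_range_succ _ _

lemma qfact_ne_zero (n : ℕ) : qfact n ≠ 0 := by
  apply Finset.prod_ne_zero_iff.mpr
  intro i _
  exact qint_pos_ne (by omega)

def PnumP (k a ℓ : ℕ) : Kq :=
  ∏ m ∈ Finset.Icc 1 ℓ, (qint (2*(a:ℤ) - 2*(m:ℤ) + 2) * qint (2*(k:ℤ) - 2*(m:ℤ) + 2))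

def PdenP (k a ℓ : ℕ) : Kq :=
  ∏ m ∈ Finset.Icc 1 ℓ, (qint (2*(k:ℤ) + 2*(a:ℤ) - 2*(m:ℤ) + 1) * qint (2*(m:ℤ)))

lemma PdenP_ne_zero (k a ℓ : ℕ) (hℓ : ℓ ≤ k) : PdenP k a ℓ ≠ 0 := by
  apply Finset.prod_ne_zero_iff.mpr
  intro m hm
  rw [Finset.mem_Icc] at hm
  exact mul_ne_zero (qint_pos_ne (by omega)) (qint_pos_ne (by omega))

lemma bridgeN (ς : Kq) (k a : ℕ) : ∀ ℓ : ℕ, ℓ ≤ k →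
    qfact (2*k+2*a) * PnumP k a ℓ * (qq*ς)^ℓ * efP ℓ
      = Nc ς k a ℓ * qfact (2*k+2*a-2*ℓ) * PdenP k a ℓ := by
  intro ℓ
  induction ℓ with
  | zero =>
    intro _
    simp [PnumP, PdenP, Nc, efP]
  | succ ℓ ih =>
    intro hk
    have hℓk : ℓ ≤ k := by omega
    have IH := ih hℓk
    have hn : 2*k+2*a-2*ℓ = (2*k+2*a-2*(ℓ+1)) + 1 + 1 := by omega
    rw [hn, qfact_succ, qfact_succ] at IH
    rw [PnumP, PdenP, Finset.prod_Icc_succ_top (by omega : 1 ≤ ℓ+1),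
      Finset.prod_Icc_succ_top (by omega : 1 ≤ ℓ+1), ← PnumP, ← PdenP,
      Nc_succ, efP_succ]
    have hc : ((2*k+2*a-2*(ℓ+1) : ℕ) : ℤ) = 2*(k:ℤ)+2*(a:ℤ)-2*(ℓ:ℤ)-2 := by omega
    have hc2 : ((2*k+2*a-2*(ℓ+1)+1 : ℕ) : ℤ) = 2*(k:ℤ)+2*(a:ℤ)-2*(ℓ:ℤ)-1 := by omega
    rw [hc2, hc] at IH
    push_cast at IH ⊢
    linear_combination (norm := ring_nf)
      ((qq*ς) * qint (2*(a:ℤ)-2*(ℓ:ℤ)) * qint (2*(k:ℤ)-2*(ℓ:ℤ)) * qint (2*(ℓ:ℤ)+2)) * IH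

lemma BoddP_even (ς : Kq) (n : ℕ) : BoddP ς (2*n) = Polynomial.C (qfact (2*n))⁻¹ * QP ς n := by
  rw [BoddP, if_pos (even_two_mul n), Nat.mul_div_cancel_left n (by norm_num)]
  rfl

lemma scal (ς : Kq) (k a ℓ : ℕ) (hℓ : ℓ ≤ k) :
    (qfact (2*k))⁻¹ * (qfact (2*a))⁻¹ * eC ς k a ℓ
      = qbinom (2*k+2*a) (2*k) *
        ((∏ m ∈ Finset.Icc 1 ℓ,
            (qint (2*(a:ℤ) - 2*(m:ℤ) + 2) * qint (2*(k:ℤ) - 2*(m:ℤ) + 2)) /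
              (qint (2*(k:ℤ) + 2*(a:ℤ) - 2*(m:ℤ) + 1) * qint (2*(m:ℤ)))) * (qq*ς)^ℓ)
        * (qfact (2*(k+a-ℓ)))⁻¹ := by
  have hb := bridgeN ς k a ℓ hℓ
  rw [qbinom, show 2*k+2*a-2*k = 2*a by omega, eC, Finset.prod_div_distrib, ← PnumP, ← PdenP,
    show 2*(k+a-ℓ) = 2*k+2*a-2*ℓ by omega]
  have h1 := qfact_ne_zero (2*k)
  have h2 := qfact_ne_zero (2*a)
  have h3 := qfact_ne_zero (2*k+2*a)
  have h4 := qfact_ne_zero (2*k+2*a-2*ℓ)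
  have h5 := efP_ne_zero ℓ
  have h6 := PdenP_ne_zero k a ℓ hℓ
  field_simp
  linear_combination -hb


/-- Multiplication formula `B_odd^{(2k)} B_odd^{(2a)}`. -/
theorem Bodd_mul_even_even (ς : Kq) (hς : ς ≠ 0) (k a : ℕ) :
    BoddP ς (2 * k) * BoddP ς (2 * a) =
    Polynomial.C (qbinom (2 * k + 2 * a) (2 * k)) *
      (BoddP ς (2 * k + 2 * a) +
        ∑ ℓ ∈ Finset.Icc 1 k,
          Polynomial.C ((∏ m ∈ Finset.Icc 1 ℓ,
              (qint (2 * (a : ℤ) - 2 * (m : ℤ) + 2) * qint (2 * (k : ℤ) - 2 * (m : ℤ) + 2)) /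
                (qint (2 * (k : ℤ) + 2 * (a : ℤ) - 2 * (m : ℤ) + 1) * qint (2 * (m : ℤ)))) *
            (qq * ς) ^ ℓ) *
          BoddP ς (2 * k + 2 * a - 2 * ℓ)) := by
  have hsum : ∀ ℓ ∈ Finset.range (k+1),
      Polynomial.C ((qfact (2*k))⁻¹ * (qfact (2*a))⁻¹ * eC ς k a ℓ) * QP ς (k+a-ℓ)
        = Polynomial.C (qbinom (2*k+2*a) (2*k)) *
            (Polynomial.C ((∏ m ∈ Finset.Icc 1 ℓ,
              (qint (2 * (a : ℤ) - 2 * (m : ℤ) + 2) * qint (2 * (k : ℤ) - 2 * (m : ℤ) + 2)) /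
                (qint (2 * (k : ℤ) + 2 * (a : ℤ) - 2 * (m : ℤ) + 1) * qint (2 * (m : ℤ)))) *
              (qq * ς) ^ ℓ) *
            BoddP ς (2 * k + 2 * a - 2 * ℓ)) := by
    intro ℓ hℓ
    have hℓk : ℓ ≤ k := by have := Finset.mem_range.mp hℓ; omega
    rw [show 2*k+2*a-2*ℓ = 2*(k+a-ℓ) by omega, BoddP_even, scal ς k a ℓ hℓk,
      map_mul, map_mul]
    ring
  calc BoddP ς (2*k) * BoddP ς (2*a)
      = ∑ ℓ ∈ Finset.range (k+1),
          Polynomial.C ((qfact (2*k))⁻¹ * (qfact (2*a))⁻¹ * eC ς k a ℓ) * QP ς (k+a-ℓ) := by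
        rw [BoddP_even, BoddP_even,
          show Polynomial.C (qfact (2*k))⁻¹ * QP ς k * (Polynomial.C (qfact (2*a))⁻¹ * QP ς a)
            = Polynomial.C (qfact (2*k))⁻¹ * Polynomial.C (qfact (2*a))⁻¹ * (QP ς k * QP ς a) by
              ring,
          mainP, Finset.mul_sum]
        refine Finset.sum_congr rfl fun ℓ _ => ?_
        rw [map_mul, map_mul]
        ring
    _ = Polynomial.C (qbinom (2*k+2*a) (2*k)) *
          ∑ ℓ ∈ Finset.range (k+1),
            Polynomial.C ((∏ m ∈ Finset.Icc 1 ℓ,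
              (qint (2 * (a : ℤ) - 2 * (m : ℤ) + 2) * qint (2 * (k : ℤ) - 2 * (m : ℤ) + 2)) /
                (qint (2 * (k : ℤ) + 2 * (a : ℤ) - 2 * (m : ℤ) + 1) * qint (2 * (m : ℤ)))) *
              (qq * ς) ^ ℓ) *
            BoddP ς (2 * k + 2 * a - 2 * ℓ) := by
        rw [Finset.sum_congr rfl hsum, ← Finset.mul_sum]
    _ = _ := by
        congr 1
        have hins : Finset.range (k+1) = insert 0 (Finset.Icc 1 k) := by
          ext x; simp [Finset.mem_Icc]; omega
        rw [hins, Finset.sum_insert (by simp)]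
        congr 1
        rw [show Finset.Icc 1 0 = (∅ : Finset ℕ) by rfl]
        simp
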